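/- Let r > 0 and t₁, t₃ be real numbers with t₁t₃ > 0, t₁ ≠ t₃, and t₃(t₁ − t₃) ≤ r² ≤ t₁(t₁ − t₃); set t₂ = t₁. Then s* = (t₁(t₁ − t₃) − r²)/(t₁ − t₃)² lies in [0,1], and any unit vector ℓ with ℓ₃² = s* satisfies λ_M(ℓ) = r²[2t₁(t₁ − t₃) − r²]/(t₁ − t₃)². -/
import Mathlib


open Matrix

/-- The function `λ_M(ℓ) = r²ℓ₃² + (1/2)[r² + ℓ′² + √((r² − ℓ′²)² + 4r²t₃²ℓ₃²)]`,
where `ℓ′² = t₁²ℓ₁² + t₂²ℓ₂² + t₃²ℓ₃²`, arising in the two-sided optimization for a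
two-qubit X state with Bloch vectors `(0,0,±r)` and correlation matrix
`diag(t₁,t₂,t₃)`. -/
noncomputable def lamM (r t₁ t₂ t₃ : ℝ) (ℓ : Fin 3 → ℝ) : ℝ :=
  r ^ 2 * ℓ 2 ^ 2 + (1 / 2) *
    (r ^ 2 + (t₁ ^ 2 * ℓ 0 ^ 2 + t₂ ^ 2 * ℓ 1 ^ 2 + t₃ ^ 2 * ℓ 2 ^ 2) +
      Real.sqrt ((r ^ 2 - (t₁ ^ 2 * ℓ 0 ^ 2 + t₂ ^ 2 * ℓ 1 ^ 2 + t₃ ^ 2 * ℓ 2 ^ 2)) ^ 2 +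
        4 * r ^ 2 * t₃ ^ 2 * ℓ 2 ^ 2))

/-- If `t₁t₃ > 0`, `t₁ ≠ t₃`, `t₃(t₁ − t₃) ≤ r² ≤ t₁(t₁ − t₃)` and `t₂ = t₁`,
then `s* = (t₁(t₁ − t₃) − r²)/(t₁ − t₃)² ∈ [0,1]`, and any unit vector `ℓ` with
`ℓ₃² = s*` satisfies `λ_M(ℓ) = r²[2t₁(t₁ − t₃) − r²]/(t₁ − t₃)²`. -/
theorem stmt_16 (r t₁ t₂ t₃ : ℝ) (hr : 0 < r)
    (hsign : 0 < t₁ * t₃) (hne : t₁ ≠ t₃)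
    (hlow : t₃ * (t₁ - t₃) ≤ r ^ 2) (hhigh : r ^ 2 ≤ t₁ * (t₁ - t₃))
    (ht2 : t₂ = t₁) :
    (0 ≤ (t₁ * (t₁ - t₃) - r ^ 2) / (t₁ - t₃) ^ 2 ∧
      (t₁ * (t₁ - t₃) - r ^ 2) / (t₁ - t₃) ^ 2 ≤ 1) ∧
    ∀ ℓ : Fin 3 → ℝ, ℓ ⬝ᵥ ℓ = 1 →
      ℓ 2 ^ 2 = (t₁ * (t₁ - t₃) - r ^ 2) / (t₁ - t₃) ^ 2 →
      lamM r t₁ t₂ t₃ ℓ = r ^ 2 * (2 * t₁ * (t₁ - t₃) - r ^ 2) / (t₁ - t₃) ^ 2 := by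
  have hd : t₁ - t₃ ≠ 0 := sub_ne_zero.mpr hne
  have hd2 : (0:ℝ) < (t₁ - t₃) ^ 2 := by positivity
  constructor
  · constructor
    · exact div_nonneg (by linarith) hd2.le
    · rw [div_le_one hd2]; nlinarith
  · intro ℓ h1 h2
    have hsum : ℓ 0 * ℓ 0 + ℓ 1 * ℓ 1 + ℓ 2 * ℓ 2 = 1 := by
      simpa [dotProduct, Fin.sum_univ_three] using h1
    have hb : ℓ 1 ^ 2 = 1 - ℓ 0 ^ 2 - ℓ 2 ^ 2 := by ring_nf; nlinarith [hsum]
    have key : (r ^ 2 - (t₁ ^ 2 * ℓ 0 ^ 2 + t₂ ^ 2 * ℓ 1 ^ 2 + t₃ ^ 2 * ℓ 2 ^ 2)) ^ 2 +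
        4 * r ^ 2 * t₃ ^ 2 * ℓ 2 ^ 2 = (t₁ * t₃) ^ 2 := by
      rw [ht2, hb, h2]; field_simp; ring
    rw [lamM, key, Real.sqrt_sq hsign.le, ht2, hb, h2]
    field_simp
    ring
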